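/- arXiv:1603.02237 — 2 statements merged into one kernel-verified Lean document; each statement's English description precedes it below -/
import Mathlib

section
/- Let R be a unital non-associative ring (i.e., a not necessarily associative ring with a multiplicative identity 1 ≠ 0). If R is simple, i.e., the only two-sided ideals of R are {0} and R (equivalently, the lattice of two-sided ideals of R is a simple order), then the center Z(R) of R is a field. -/
/-!
Left multiplication by a central element `z` commutes with left and right multiplication by
arbitrary elements, so its kernel and its image are two-sided ideals. If `z ≠ 0`, simplicity forces
the kernel to be `⊥` and the image to be `⊤`; hence `z * x = 1` for some `x`, and cancelling `z`
transfers each of the identities defining the center from `z` to `x`.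
-/

namespace IsMulCentral

section NonUnital

variable {R : Type*} [NonUnitalNonAssocRing R] {z : R}

def kerMulLeft (hz : IsMulCentral z) : TwoSidedIdeal R :=
  TwoSidedIdeal.mk' {r | z * r = 0} (mul_zero z)
    (fun {x y} (hx : z * x = 0) (hy : z * y = 0) => show z * (x + y) = 0 by
      rw [mul_add, hx, hy, add_zero])
    (fun {x} (hx : z * x = 0) => show z * -x = 0 by rw [mul_neg, hx, neg_zero])
    (fun {x y} (hy : z * y = 0) => show z * (x * y) = 0 by rw [hz.left_comm, hy, mul_zero])
    (fun {x y} (hx : z * x = 0) => show z * (x * y) = 0 by rw [hz.left_assoc, hx, zero_mul])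

lemma mem_kerMulLeft (hz : IsMulCentral z) {r : R} : r ∈ hz.kerMulLeft ↔ z * r = 0 :=
  TwoSidedIdeal.mem_mk' ..

def rangeMulLeft (hz : IsMulCentral z) : TwoSidedIdeal R :=
  TwoSidedIdeal.mk' {r | ∃ s, z * s = r} ⟨0, mul_zero z⟩
    (fun {_ _} ⟨s, hs⟩ ⟨t, ht⟩ => ⟨s + t, by rw [← hs, ← ht, mul_add]⟩)
    (fun {_} ⟨s, hs⟩ => ⟨-s, by rw [← hs, mul_neg]⟩)
    (fun {x _} ⟨s, hs⟩ => ⟨x * s, by rw [← hs, hz.left_comm]⟩)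
    (fun {_ y} ⟨s, hs⟩ => ⟨s * y, by rw [← hs, hz.left_assoc]⟩)

lemma mem_rangeMulLeft (hz : IsMulCentral z) {r : R} : r ∈ hz.rangeMulLeft ↔ ∃ s, z * s = r :=
  TwoSidedIdeal.mem_mk' ..

end NonUnital

section Unital

variable {R : Type*} [NonAssocRing R] [IsSimpleRing R] {z : R}

lemma mulLeft_injective (hz : IsMulCentral z) (hz0 : z ≠ 0) : Function.Injective (z * ·) := by
  have hker : hz.kerMulLeft = ⊥ := (eq_bot_or_eq_top _).resolve_right fun htop =>
    hz0 <| by simpa using hz.mem_kerMulLeft.1 ((TwoSidedIdeal.one_mem_iff _).2 htop)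
  refine (injective_iff_map_eq_zero (AddMonoidHom.mulLeft z)).2 fun r hr => ?_
  rw [← TwoSidedIdeal.mem_bot, ← hker, hz.mem_kerMulLeft]
  exact hr

lemma exists_mul_eq_one (hz : IsMulCentral z) (hz0 : z ≠ 0) : ∃ x, z * x = 1 :=
  hz.mem_rangeMulLeft.1 <|
    IsSimpleRing.one_mem_of_ne_zero_mem _ hz0 (hz.mem_rangeMulLeft.2 ⟨1, mul_one z⟩)

end Unital

lemma isMulCentral_of_mul_eq_one {R : Type*} [NonAssocSemiring R] {z x : R} (hz : IsMulCentral z)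
    (hinj : Function.Injective (z * ·)) (hx : z * x = 1) : IsMulCentral x := by
  have cancel_left (u : R) : z * (x * u) = u := by rw [hz.left_assoc, hx, one_mul]
  have cancel_right (u : R) : z * (u * x) = u := by rw [hz.left_comm, hx, mul_one]
  refine ⟨fun a => hinj ?_, fun b c => hinj ?_, fun a b => hinj ?_⟩
  · change z * (x * a) = z * (a * x)
    rw [cancel_left, cancel_right]
  · change z * (x * (b * c)) = z * (x * b * c)
    rw [cancel_left, hz.left_assoc, cancel_left]
  · change z * (a * b * x) = z * (a * (b * x))
    rw [cancel_right, hz.left_comm, cancel_right]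

end IsMulCentral

theorem center_isField_of_simple_general (R : Type*) [NonAssocRing R]
    (h : IsSimpleOrder (TwoSidedIdeal R)) :
    letI : CommSemiring (Subsemiring.center R) := Subsemiring.center.commSemiring' R
    IsField (Subsemiring.center R) := by
  have : IsSimpleRing R := ⟨h⟩
  let : CommSemiring (Subsemiring.center R) := Subsemiring.center.commSemiring' R
  refine ⟨exists_pair_ne _, mul_comm, ?_⟩
  rintro ⟨z, hz⟩ hz0
  replace hz0 : z ≠ 0 := fun e => hz0 (Subtype.ext e)
  obtain ⟨x, hx⟩ := hz.exists_mul_eq_one hz0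
  exact ⟨⟨x, hz.isMulCentral_of_mul_eq_one (hz.mulLeft_injective hz0) hx⟩, Subtype.ext hx⟩

/-- Proposition 2.1: If `R` is a unital non-associative ring which is simple
(its lattice of two-sided ideals is a simple order), then its center is a field. -/
theorem center_isField_of_simple (R : Type*) [NonAssocRing R] [Nontrivial R]
    (h : IsSimpleOrder (TwoSidedIdeal R)) :
    letI : CommSemiring (Subsemiring.center R) := Subsemiring.center.commSemiring' R
    IsField (Subsemiring.center R) :=
  center_isField_of_simple_general R h
end

section
/- Let S be a (unital, associative) ring and R a subring of S such that R is a direct summand of S as a left R-module; that is, there exists a left R-submodule T of S with S = R ⊕ T (internally: R ∩ T = {0} and R + T = S). If S is right artinian (respectively, right noetherian), then R is right artinian (respectively, right noetherian). -/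
/-!
If `π : S → R` is a left `R`-linear retraction of the inclusion `R ⊆ S`, then extension of right
ideals `I ↦ IS` is injective: `π (IS) ⊆ I` because `π (i s) = i π(s)`, while `π` fixes `I`, so
`IS ∩ R = I`. An order embedding of the lattice of right ideals of `R` into that of `S` transfers
both chain conditions from `S` to `R`. Passing to opposite rings, right ideals become the
`Ideal`s of `Rᵐᵒᵖ` and `Sᵐᵒᵖ`, and extension becomes `Ideal.map`.
-/

section Retraction

variable {A B : Type*} [Ring A] [Ring B] (f : A →+* B) (p : B →+ A)

theorem Ideal.comap_map_of_retraction
    (hp : ∀ b a, p (b * f a) = p b * a) (hpf : ∀ a, p (f a) = a) (I : Ideal A) :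
    (I.map f).comap f = I := by
  refine le_antisymm (fun a ha => ?_) Ideal.le_comap_map
  -- the largest left ideal of `B` on which `p` takes values in `I`
  let K : Ideal B :=
    { carrier := {b | ∀ c, p (c * b) ∈ I}
      add_mem' := fun hx hy c => by simpa only [mul_add, map_add] using I.add_mem (hx c) (hy c)
      zero_mem' := fun c => by simp
      smul_mem' := fun c b hb d => by simpa only [smul_eq_mul, ← mul_assoc] using hb (d * c) }
  have hIK : I.map f ≤ K := Ideal.map_le_iff_le_comap.mpr fun i hi c => by
    simpa only [hp] using I.mul_mem_left (p c) hi
  simpa only [one_mul, hpf] using hIK ha 1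

theorem Ideal.map_strictMono_of_retraction
    (hp : ∀ b a, p (b * f a) = p b * a) (hpf : ∀ a, p (f a) = a) :
    StrictMono (Ideal.map f : Ideal A → Ideal B) :=
  Monotone.strictMono_of_injective (fun _ _ => Ideal.map_mono)
    (Function.LeftInverse.injective (g := Ideal.comap f)
      (Ideal.comap_map_of_retraction f p hp hpf))

theorem isArtinianRing_of_retraction [IsArtinianRing B]
    (hp : ∀ b a, p (b * f a) = p b * a) (hpf : ∀ a, p (f a) = a) :
    IsArtinianRing A :=
  (Ideal.map_strictMono_of_retraction f p hp hpf).wellFoundedLT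

theorem isNoetherianRing_of_retraction [IsNoetherianRing B]
    (hp : ∀ b a, p (b * f a) = p b * a) (hpf : ∀ a, p (f a) = a) :
    IsNoetherianRing A := by
  rw [IsNoetherianRing, isNoetherian_iff'] at *
  exact (Ideal.map_strictMono_of_retraction f p hp hpf).wellFoundedGT

end Retraction

theorem Subring.exists_linearMap_retraction_of_isCompl {S : Type*} [Ring S] {R : Subring S}
    {M T : Submodule R S} (hM : (M : Set S) = R) (hMT : IsCompl M T) :
    ∃ π : S →ₗ[R] R, ∀ r : R, π r = r := by
  let i : R →ₗ[R] S := LinearMap.toSpanSingleton R S 1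
  have hi : ∀ r : R, i r = r := fun r => mul_one (r : S)
  have hrange : LinearMap.range i = M := by
    refine SetLike.coe_injective (hM ▸ Set.ext fun s => ?_)
    exact ⟨fun ⟨r, hr⟩ => hr ▸ (hi r).symm ▸ r.2, fun hs => ⟨⟨s, hs⟩, hi _⟩⟩
  have hinj : Function.Injective i := fun r r' h => Subtype.ext (by rwa [hi, hi] at h)
  refine ⟨LinearMap.linearProjOfIsCompl T i hinj (hrange ▸ hMT), fun r => ?_⟩
  simpa only [hi] using LinearMap.linearProjOfIsCompl_apply_left T i hinj (hrange ▸ hMT) r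

/-- Proposition 2.3 (second assertion): if a subring `R` of a ring `S` is a direct summand
of `S` as a left `R`-module, and `S` is right artinian (resp. right noetherian), then
`R` is right artinian (resp. right noetherian). -/
theorem right_artinian_noetherian_of_direct_summand
    (S : Type*) [Ring S] (R : Subring S)
    -- `R` itself, viewed as a left `R`-submodule of `S`
    (M : Submodule ↥R S) (hM : (M : Set S) = (R : Set S))
    -- a complement: `S = R ⊕ T` as left `R`-modules
    (T : Submodule ↥R S) (hMT_inf : M ⊓ T = ⊥) (hMT_sup : M ⊔ T = ⊤) :
    (IsArtinianRing Sᵐᵒᵖ → IsArtinianRing (↥R)ᵐᵒᵖ) ∧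
    (IsNoetherianRing Sᵐᵒᵖ → IsNoetherianRing (↥R)ᵐᵒᵖ) := by
  obtain ⟨π, hπ⟩ := Subring.exists_linearMap_retraction_of_isCompl hM
    ⟨disjoint_iff.mpr hMT_inf, codisjoint_iff.mpr hMT_sup⟩
  let f : (↥R)ᵐᵒᵖ →+* Sᵐᵒᵖ := RingHom.op R.subtype
  let p : Sᵐᵒᵖ →+ (↥R)ᵐᵒᵖ := AddMonoidHom.mulOp π.toAddMonoidHom
  have hp : ∀ b a, p (b * f a) = p b * a := fun b a =>
    congrArg MulOpposite.op (π.map_smul a.unop b.unop)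
  have hpf : ∀ a, p (f a) = a := fun a => congrArg MulOpposite.op (hπ a.unop)
  exact ⟨fun _ => isArtinianRing_of_retraction f p hp hpf,
    fun _ => isNoetherianRing_of_retraction f p hp hpf⟩
end
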